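/- arXiv:2605.28570 — 6 statements merged into one kernel-verified Lean document; each statement's English description precedes it below -/
import Mathlib

section
/- A binary word x is overlap-free if and only if μ(x) is overlap-free, where μ is the Thue-Morse morphism defined by μ(0)=01, μ(1)=10. -/
/-!
An overlap of `w` is a factor of length `2p + 1` with period `p > 0`. Since `μ` maps position
`n` to positions `2n, 2n + 1`, an overlap of period `p` at `k` in `x` gives one of period `2p`
at `2k` in `μ(x)`. Conversely, an overlap in `μ(x)` cannot have odd period `p`: the blocks
`μ(b) = b·¬b` together with their shifts by `p` would make `μ(x)` alternate along the whole
window, so that its letters at distance `p` differ. An overlap of even period `2q` at `k` in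
`μ(x)` descends to an overlap of period `q` at `⌊k/2⌋` in `x`.
-/

/-- Thue–Morse morphism: μ(0)=01, μ(1)=10, encoding 0 = false, 1 = true. -/
def mu (w : List Bool) : List Bool := w.flatMap fun b => [b, !b]

/-- A word is an overlap if it has the form a·x·a·x·a for a letter a. -/
def IsOverlap (w : List Bool) : Prop :=
  ∃ (a : Bool) (x : List Bool), w = [a] ++ x ++ [a] ++ x ++ [a]

/-- A word contains an overlap as a factor. -/
def HasOverlap (w : List Bool) : Prop := ∃ f, f <:+: w ∧ IsOverlap f

/-- A word is overlap-free if no factor is an overlap. -/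
def OverlapFree (w : List Bool) : Prop := ∀ f, f <:+: w → ¬ IsOverlap f

lemma mu_cons (b : Bool) (w : List Bool) : mu (b :: w) = b :: (!b) :: mu w := rfl

lemma length_mu (w : List Bool) : (mu w).length = 2 * w.length := by
  induction w with
  | nil => rfl
  | cons b w ih => simp [mu_cons, ih]; ring

lemma getElem?_mu_two_mul (w : List Bool) (n : ℕ) : (mu w)[2 * n]? = w[n]? := by
  induction w generalizing n with
  | nil => rfl
  | cons b w ih => cases n <;> simp [mu_cons, Nat.mul_succ, ih]

lemma getElem?_mu_two_mul_add_one (w : List Bool) (n : ℕ) :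
    (mu w)[2 * n + 1]? = w[n]?.map not := by
  induction w generalizing n with
  | nil => rfl
  | cons b w ih => cases n <;> simp [mu_cons, Nat.mul_succ, ih]

/-- The factor of `w` at positions `k, …, k + 2p` is an overlap `a·x·a·x·a` with `p = |a·x|`. -/
def OverlapAt {α : Type*} (w : List α) (k p : ℕ) : Prop :=
  0 < p ∧ k + 2 * p < w.length ∧ ∀ i ≤ p, w[k + i]? = w[k + p + i]?

lemma isOverlap_iff (f : List Bool) :
    IsOverlap f ↔ ∃ p, f.length = 2 * p + 1 ∧ OverlapAt f 0 p := by
  constructor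
  · rintro ⟨a, x, rfl⟩
    have e₁ : [a] ++ x ++ [a] ++ x ++ [a] = (a :: x) ++ (a :: x ++ [a]) := by simp
    have e₂ : [a] ++ x ++ [a] ++ x ++ [a] = (a :: x ++ [a]) ++ (x ++ [a]) := by simp
    refine ⟨x.length + 1, by simp; omega, by omega, by simp; omega, fun i hi => ?_⟩
    have h₁ : ([a] ++ x ++ [a] ++ x ++ [a])[0 + i]? = (a :: x ++ [a])[i]? := by
      rw [e₂, zero_add, List.getElem?_append_left (by simp; omega)]
    have h₂ : ([a] ++ x ++ [a] ++ x ++ [a])[0 + (x.length + 1) + i]? = (a :: x ++ [a])[i]? := by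
      rw [e₁, List.getElem?_append_right (by simp)]
      simp
    rw [h₁, h₂]
  · rintro ⟨p, hlen, hp, -, hper⟩
    simp only [zero_add] at hper
    have hdrop : f.drop p = f.take (p + 1) := List.ext_getElem? fun i => by
      rw [List.getElem?_drop, List.getElem?_take]
      split_ifs with hi
      · exact (hper i (by omega)).symm
      · exact List.getElem?_eq_none (by omega)
    obtain ⟨a, x, hax⟩ : ∃ a x, f.take p = a :: x :=
      List.exists_cons_of_ne_nil (List.ne_nil_of_length_pos (by simp; omega))
    have hlast : f[p]? = some a := by
      rw [← add_zero p, ← hper 0 (Nat.zero_le _), ← List.getElem?_take_of_lt hp, hax]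
      rfl
    refine ⟨a, x, ?_⟩
    rw [← List.take_append_drop p f, hdrop, List.take_add_one, hax, hlast]
    simp

lemma overlapFree_iff (w : List Bool) : OverlapFree w ↔ ∀ k p, ¬ OverlapAt w k p := by
  constructor
  · rintro hw k p ⟨hp, hlen, hper⟩
    refine hw ((w.drop k).take (2 * p + 1))
      ((List.take_prefix _ _).isInfix.trans (List.drop_suffix _ _).isInfix) ?_
    refine (isOverlap_iff _).2 ⟨p, by simp; omega, hp, by simp; omega, fun i hi => ?_⟩
    rw [List.getElem?_take, List.getElem?_take, if_pos (by omega), if_pos (by omega),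
      List.getElem?_drop, List.getElem?_drop, zero_add, zero_add, ← add_assoc, hper i hi]
  · rintro hw f hf hov
    obtain ⟨p, hflen, hp, -, hper⟩ := (isOverlap_iff f).1 hov
    obtain ⟨k, hk, hget⟩ := List.infix_iff_getElem?.1 hf
    have hwf : ∀ i < f.length, w[k + i]? = f[i]? := fun i hi => by
      rw [add_comm, hget i hi, List.getElem?_eq_getElem hi]
    refine hw k p ⟨hp, by omega, fun i hi => ?_⟩
    have := hper i hi
    rw [zero_add, zero_add] at this
    rw [hwf i (by omega), add_assoc, hwf (p + i) (by omega), this]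

lemma OverlapAt.mu_two_mul {x : List Bool} {k p : ℕ} (h : OverlapAt x k p) :
    OverlapAt (mu x) (2 * k) (2 * p) := by
  obtain ⟨hp, hlen, hper⟩ := h
  refine ⟨by omega, by rw [length_mu]; omega, fun i hi => ?_⟩
  obtain ⟨j, rfl | rfl⟩ := Nat.even_or_odd' i
  · rw [show 2 * k + 2 * j = 2 * (k + j) by ring,
      show 2 * k + 2 * p + 2 * j = 2 * (k + p + j) by ring,
      getElem?_mu_two_mul, getElem?_mu_two_mul, hper j (by omega)]
  · rw [show 2 * k + (2 * j + 1) = 2 * (k + j) + 1 by ring,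
      show 2 * k + 2 * p + (2 * j + 1) = 2 * (k + p + j) + 1 by ring,
      getElem?_mu_two_mul_add_one, getElem?_mu_two_mul_add_one, hper j (by omega)]

lemma OverlapAt.of_mu {x : List Bool} {k q : ℕ} (h : OverlapAt (mu x) k (2 * q)) :
    OverlapAt x (k / 2) q := by
  obtain ⟨hp, hlen, hper⟩ := h
  rw [length_mu] at hlen
  refine ⟨by omega, by omega, fun j hj => ?_⟩
  have e := hper (2 * j) (by omega)
  obtain ⟨m, rfl | rfl⟩ := Nat.even_or_odd' k
  · rw [show 2 * m + 2 * j = 2 * (m + j) by ring,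
      show 2 * m + 2 * q + 2 * j = 2 * (m + q + j) by ring,
      getElem?_mu_two_mul, getElem?_mu_two_mul] at e
    rwa [show 2 * m / 2 = m by omega]
  · rw [show 2 * m + 1 + 2 * j = 2 * (m + j) + 1 by ring,
      show 2 * m + 1 + 2 * q + 2 * j = 2 * (m + q + j) + 1 by ring,
      getElem?_mu_two_mul_add_one, getElem?_mu_two_mul_add_one] at e
    rw [show (2 * m + 1) / 2 = m by omega]
    exact Option.map_injective Bool.not_injective e

lemma getElem?_add_eq_map_of_odd {α : Type*} {f : α → α} (hf : Function.Involutive f)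
    {t : List α} {k p : ℕ} (hstep : ∀ j, k ≤ j → j < k + p → t[j + 1]? = t[j]?.map f)
    (hp : Odd p) : t[k + p]? = t[k]?.map f := by
  have hiter : ∀ i ≤ p, t[k + i]? = (Option.map f)^[i] t[k]? := by
    intro i hi
    induction i with
    | zero => rfl
    | succ i ih =>
      rw [Function.iterate_succ_apply', ← ih (by omega), ← add_assoc, hstep _ (by omega) (by omega)]
  have hinv : Function.Involutive (Option.map f) := fun o => by cases o <;> simp [hf _]
  rw [hiter p le_rfl, hinv.iterate_odd hp]

lemma OverlapAt.even_of_mu {x : List Bool} {k p : ℕ} (h : OverlapAt (mu x) k p) : Even p := by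
  obtain ⟨-, hlen, hper⟩ := h
  by_contra hodd
  rw [Nat.not_even_iff_odd] at hodd
  have hblock : ∀ n, (mu x)[2 * n + 1]? = (mu x)[2 * n]?.map not := fun n => by
    rw [getElem?_mu_two_mul, getElem?_mu_two_mul_add_one]
  -- At an odd position `j` the letters at `j, j + 1` reappear at `j + p, j + p + 1`,
  -- which form a block `μ(b)` since `p` is odd.
  have halt : ∀ j, k ≤ j → j < k + p → (mu x)[j + 1]? = (mu x)[j]?.map not := by
    intro j hkj hjp
    obtain ⟨n, rfl | rfl⟩ := Nat.even_or_odd' j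
    · exact hblock n
    · obtain ⟨q, rfl⟩ := hodd
      have h1 := hper (2 * n + 1 - k) (by omega)
      have h2 := hper (2 * n + 2 - k) (by omega)
      rw [show k + (2 * n + 1 - k) = 2 * n + 1 by omega,
        show k + (2 * q + 1) + (2 * n + 1 - k) = 2 * (n + q + 1) by omega] at h1
      rw [show k + (2 * n + 2 - k) = 2 * n + 1 + 1 by omega,
        show k + (2 * q + 1) + (2 * n + 2 - k) = 2 * (n + q + 1) + 1 by omega] at h2
      rw [h1, h2, hblock]
  have hk := getElem?_add_eq_map_of_odd Bool.not_not halt hodd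
  obtain ⟨b, hb⟩ : ∃ b, (mu x)[k]? = some b := ⟨_, List.getElem?_eq_getElem (by omega)⟩
  have h0 := hper 0 (by omega)
  simp only [add_zero, hk, hb, Option.map_some, Option.some_inj] at h0
  exact Bool.not_ne_self b h0.symm

theorem stmt_0 (x : List Bool) : OverlapFree x ↔ OverlapFree (mu x) := by
  rw [overlapFree_iff, overlapFree_iff]
  constructor
  · intro hx k p h
    obtain ⟨q, rfl⟩ := h.even_of_mu
    rw [← two_mul] at h
    exact hx _ _ h.of_mu
  · exact fun hμ k p h => hμ _ _ h.mu_two_mul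
end

section
/- Let x be a binary word and a a letter. If the word x·a contains an overlap as a factor, then so does μ(x)·a, where μ is the Thue-Morse morphism. -/
/-!
If `w·b` is an overlap `b·y·b·y·b`, then `μ(w)·b = b·(b̄·μy)·b·(b̄·μy)·b` is again an overlap,
since `μ(b) = b·b̄`. An overlap inside `x·a` either lies inside `x`, and then its image lies
inside `μ(x)`, or is a suffix `w·a` with `w` a suffix of `x`, and then `μ(w)·a` is a suffix of
`μ(x)·a`.
-/

lemma List.IsSuffix.mu {u v : List Bool} (h : u <:+ v) : mu u <:+ mu v := h.flatMap _

lemma List.IsInfix.mu {u v : List Bool} (h : u <:+: v) : mu u <:+: mu v := h.flatMap _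

lemma isOverlap_mu_append_singleton {w : List Bool} {b : Bool} (h : IsOverlap (w ++ [b])) :
    IsOverlap (mu w ++ [b]) := by
  obtain ⟨c, y, hwy⟩ := h
  obtain ⟨rfl, hbc⟩ := List.append_inj' hwy rfl
  obtain rfl := List.singleton_inj.mp hbc
  exact ⟨b, (!b) :: mu y, by simp [mu]⟩

theorem stmt_2 (x : List Bool) (a : Bool) (h : HasOverlap (x ++ [a])) :
    HasOverlap (mu x ++ [a]) := by
  obtain ⟨f, hf, b, y, rfl⟩ := h
  set w := [b] ++ y ++ [b] ++ y
  have hmu : IsOverlap (mu w ++ [b]) := isOverlap_mu_append_singleton ⟨b, y, rfl⟩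
  refine ⟨mu w ++ [b], ?_, hmu⟩
  rcases List.infix_concat_iff.mp hf with hsuf | hinf
  · obtain ⟨t, hwt, ht⟩ := (List.suffix_concat_iff.mp hsuf).resolve_left (by simp)
    obtain ⟨rfl, hba⟩ := List.append_inj' hwt rfl
    obtain rfl := List.singleton_inj.mp hba
    exact (List.suffix_append_self_iff.mpr ht.mu).isInfix
  · have hprefix : mu w ++ [b] <+: mu (w ++ [b]) := ⟨[!b], by simp [mu]⟩
    exact hprefix.isInfix.trans (hinf.mu.trans (List.infix_append [] _ _))
end

section
/- Let a be a letter and y an overlap-free binary word with |y| ≥ 6. If a·a·μ(y) is overlap-free, then y begins with the word ā·a·ā. -/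
namespace OverlapFree

variable {a b : Bool} {r : List Bool}

lemma eq_not_of_cons_cons (h : OverlapFree (a :: a :: b :: r)) : b = !a := by
  rw [Bool.eq_not_iff]
  rintro rfl
  exact h [b, b, b] ⟨[], r, rfl⟩ ⟨b, [], rfl⟩

lemma eq_of_cons_cons_not_cons (h : OverlapFree (a :: a :: (!a) :: a :: b :: (!b) :: r)) :
    b = a := by
  by_contra hb
  obtain rfl := Bool.eq_not_iff.mpr hb
  exact h [a, !a, a, !a, a] ⟨[a], r, by simp⟩ ⟨a, [!a], rfl⟩

lemma eq_not_of_cons_cons_not_cons_cons_not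
    (h : OverlapFree (a :: a :: (!a) :: a :: a :: (!a) :: b :: r)) : b = !a := by
  rw [Bool.eq_not_iff]
  rintro rfl
  exact h [b, b, !b, b, b, !b, b] ⟨[], r, rfl⟩ ⟨b, [b, !b], rfl⟩

end OverlapFree

theorem stmt_10_general (a : Bool) (y : List Bool)
    (hlen : 6 ≤ y.length) (h : OverlapFree ([a, a] ++ mu y)) :
    [!a, a, !a] <+: y := by
  obtain ⟨b, c, d, t, rfl⟩ : ∃ b c d t, y = b :: c :: d :: t := by
    match y, hlen with
    | b :: c :: d :: t, _ => exact ⟨b, c, d, t, rfl⟩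
  simp only [mu_cons, List.cons_append, List.nil_append] at h
  obtain rfl := h.eq_not_of_cons_cons
  simp only [Bool.not_not] at h
  obtain rfl := h.eq_of_cons_cons_not_cons
  obtain rfl := h.eq_not_of_cons_cons_not_cons_cons_not
  exact ⟨t, rfl⟩

theorem stmt_10 (a : Bool) (y : List Bool) (hy : OverlapFree y)
    (hlen : 6 ≤ y.length) (h : OverlapFree ([a, a] ++ mu y)) :
    [!a, a, !a] <+: y :=
  stmt_10_general a y hlen h
end

section
/- Let A = 00, B = 11, C = 010010, D = 101101. Every concatenation of nine or more words chosen from {A, B, C, D} contains an overlap as a factor. -/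
theorem HasOverlap.mono {v w : List Bool} (hv : HasOverlap v) (h : v <:+: w) : HasOverlap w :=
  let ⟨f, hf, ho⟩ := hv
  ⟨f, hf.trans h, ho⟩

theorem isOverlap_append_self_take_one {y : List Bool} (hy : y ≠ []) :
    IsOverlap (y ++ y ++ y.take 1) := by
  obtain ⟨a, x, rfl⟩ := List.exists_cons_of_ne_nil hy
  exact ⟨a, x, by simp⟩

theorem isOverlap_take_of_take_eq_take_drop {u : List Bool} {p : ℕ} (hp : 1 ≤ p)
    (hpu : p ≤ u.length) (h : u.take (p + 1) = (u.drop p).take (p + 1)) :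
    IsOverlap (u.take (2 * p + 1)) := by
  have hfirst : u.take 1 = (u.drop p).take 1 := by
    simpa [List.take_take, Nat.min_eq_left (by omega : 1 ≤ p + 1)] using congrArg (List.take 1) h
  have hsplit : u.take (2 * p + 1) = u.take p ++ u.take p ++ (u.take p).take 1 := by
    rw [show 2 * p + 1 = p + (p + 1) by omega, List.take_add, ← h, List.take_add, ← hfirst,
      List.take_take, Nat.min_eq_left hp]
    simp [List.append_assoc]
  rw [hsplit]
  apply isOverlap_append_self_take_one
  rw [← List.length_pos_iff, List.length_take]
  omega

def hasOverlapB (w : List Bool) : Bool :=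
  w.tails.any fun u =>
    (List.range' 1 u.length).any fun p => u.take (p + 1) == (u.drop p).take (p + 1)

theorem HasOverlap.of_hasOverlapB {w : List Bool} (h : hasOverlapB w = true) : HasOverlap w := by
  simp only [hasOverlapB, List.any_eq_true, List.mem_tails, List.mem_range'_1, beq_iff_eq] at h
  obtain ⟨u, hu, p, ⟨hp, hpu⟩, heq⟩ := h
  exact ⟨u.take (2 * p + 1), (u.take_prefix _).isInfix.trans hu.isInfix,
    isOverlap_take_of_take_eq_take_drop hp (by omega) heq⟩

def overlapForced (bs : List (List Bool)) : List Bool → ℕ → Bool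
  | w, 0 => hasOverlapB w
  | w, n + 1 => hasOverlapB w || bs.all fun b => overlapForced bs (w ++ b) n

theorem hasOverlap_append_flatten_of_overlapForced {bs l : List (List Bool)} {w : List Bool}
    (hforced : overlapForced bs w l.length = true) (hmem : ∀ s ∈ l, s ∈ bs) :
    HasOverlap (w ++ l.flatten) := by
  induction l generalizing w with
  | nil => simpa using HasOverlap.of_hasOverlapB hforced
  | cons b l ih =>
    rw [List.length_cons, overlapForced, Bool.or_eq_true, List.all_eq_true] at hforced
    rcases hforced with hw | hext
    · exact (HasOverlap.of_hasOverlapB hw).mono (List.prefix_append _ _).isInfix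
    · simpa [List.append_assoc] using
        ih (hext b (hmem b List.mem_cons_self)) fun s hs => hmem s (List.mem_cons_of_mem _ hs)

theorem stmt_11 (l : List (List Bool)) (hlen : 9 ≤ l.length)
    (hmem : ∀ s ∈ l, s ∈ [[false, false], [true, true],
        [false, true, false, false, true, false],
        [true, false, true, true, false, true]]) :
    HasOverlap l.flatten := by
  have hprefix : HasOverlap (l.take 9).flatten := by
    refine List.nil_append (l.take 9).flatten ▸
      hasOverlap_append_flatten_of_overlapForced ?_ fun s hs => hmem s (List.mem_of_mem_take hs)
    rw [List.length_take_of_le hlen]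
    decide
  exact hprefix.mono (l.take_prefix 9).flatten.isInfix
end

section
/- Let A = 00, B = 11, C = 010010, D = 101101. There are exactly 8 overlap-free words that are concatenations of exactly 8 words from {A,B,C,D}, namely those given by the letter sequences ABADABAD, ABCBABCB, ADABADAB, BABCBABC, BADABADA, BCBABCBA, CBABCBAB, DABADABA. -/
def A : List Bool := [false, false]
def B : List Bool := [true, true]
def C : List Bool := [false, true, false, false, true, false]
def D : List Bool := [true, false, true, true, false, true]

-- An overlap `a x a x a` has length `2 |x| + 3`, so `a` and `x` can be read off its length.
lemma isOverlap_iff_eq_headI_take (p : List Bool) :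
    IsOverlap p ↔ p = [p.headI] ++ p.tail.take (p.length / 2 - 1) ++ [p.headI] ++
      p.tail.take (p.length / 2 - 1) ++ [p.headI] := by
  refine ⟨?_, fun h => ⟨_, _, h⟩⟩
  rintro ⟨a, x, rfl⟩
  have hlen : ([a] ++ x ++ [a] ++ x ++ [a]).length / 2 - 1 = x.length := by grind
  rw [hlen]
  simp

instance : DecidablePred IsOverlap := fun p => decidable_of_iff' _ (isOverlap_iff_eq_headI_take p)

lemma overlapFree_iff_forall_mem_tails_inits (w : List Bool) :
    OverlapFree w ↔ ∀ t ∈ w.tails, ∀ f ∈ t.inits, ¬ IsOverlap f := by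
  simp only [List.mem_tails, List.mem_inits]
  refine ⟨fun h t ht f hf => h f (hf.isInfix.trans ht.isInfix), fun h f hf => ?_⟩
  obtain ⟨t, hft, htw⟩ := List.infix_iff_prefix_suffix.mp hf
  exact h t htw f hft

instance : DecidablePred OverlapFree := fun w =>
  decidable_of_iff' _ (overlapFree_iff_forall_mem_tails_inits w)

lemma OverlapFree.of_infix {u v : List Bool} (h : u <:+: v) (hv : OverlapFree v) :
    OverlapFree u := fun f hf => hv f (hf.trans h)

def overlapFreeConcats (bs : List (List Bool)) : ℕ → List (List (List Bool))
  | 0 => [[]]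
  | n + 1 => ((overlapFreeConcats bs n).flatMap fun l => bs.map (l ++ [·])).filter
      fun l => OverlapFree l.flatten

lemma mem_overlapFreeConcats {bs : List (List Bool)} {n : ℕ} {l : List (List Bool)} :
    l ∈ overlapFreeConcats bs n ↔
      l.length = n ∧ (∀ s ∈ l, s ∈ bs) ∧ OverlapFree l.flatten := by
  induction n generalizing l with
  | zero =>
    simp only [overlapFreeConcats, List.mem_singleton, List.length_eq_zero_iff]
    constructor
    · rintro rfl
      simp [OverlapFree, IsOverlap]
    · exact fun h => h.1
  | succ n ih =>
    simp only [overlapFreeConcats, List.mem_filter, List.mem_flatMap, List.mem_map, ih,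
      decide_eq_true_eq]
    constructor
    · rintro ⟨⟨l', ⟨hlen, hbs, -⟩, b, hb, rfl⟩, hfree⟩
      refine ⟨by simp [hlen], fun s hs => ?_, hfree⟩
      rcases List.mem_append.mp hs with hs | hs
      · exact hbs s hs
      · exact List.mem_singleton.mp hs ▸ hb
    · rintro ⟨hlen, hbs, hfree⟩
      cases l using List.reverseRecOn with
      | nil => simp at hlen
      | append_singleton l' b _ =>
        refine ⟨⟨l', ⟨by simpa using hlen, fun s hs => hbs s (by simp [hs]), ?_⟩, b,
          hbs b (by simp), rfl⟩, hfree⟩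
        exact hfree.of_infix (by simpa using List.infix_append_left)

lemma mem_map_flatten_overlapFreeConcats {bs : List (List Bool)} {n : ℕ} {w : List Bool} :
    w ∈ (overlapFreeConcats bs n).map List.flatten ↔
      OverlapFree w ∧
        ∃ l : List (List Bool), l.length = n ∧ (∀ s ∈ l, s ∈ bs) ∧ l.flatten = w := by
  simp only [List.mem_map, mem_overlapFreeConcats]
  constructor
  · rintro ⟨l, ⟨hlen, hbs, hfree⟩, rfl⟩
    exact ⟨hfree, l, hlen, hbs, rfl⟩
  · rintro ⟨hfree, l, hlen, hbs, rfl⟩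
    exact ⟨l, ⟨hlen, hbs, hfree⟩, rfl⟩

theorem stmt_12 :
    ([[A,B,A,D,A,B,A,D].flatten, [A,B,C,B,A,B,C,B].flatten, [A,D,A,B,A,D,A,B].flatten,
      [B,A,B,C,B,A,B,C].flatten, [B,A,D,A,B,A,D,A].flatten, [B,C,B,A,B,C,B,A].flatten,
      [C,B,A,B,C,B,A,B].flatten, [D,A,B,A,D,A,B,A].flatten] : List (List Bool)).Nodup ∧
    ∀ w : List Bool,
      (OverlapFree w ∧
        ∃ l : List (List Bool), l.length = 8 ∧ (∀ s ∈ l, s ∈ [A, B, C, D]) ∧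
          l.flatten = w) ↔
      w ∈ [[A,B,A,D,A,B,A,D].flatten, [A,B,C,B,A,B,C,B].flatten, [A,D,A,B,A,D,A,B].flatten,
            [B,A,B,C,B,A,B,C].flatten, [B,A,D,A,B,A,D,A].flatten, [B,C,B,A,B,C,B,A].flatten,
            [C,B,A,B,C,B,A,B].flatten, [D,A,B,A,D,A,B,A].flatten] := by
  refine ⟨by decide, fun w => ?_⟩
  rw [← mem_map_flatten_overlapFreeConcats]
  exact Iff.of_eq (congrArg (w ∈ ·) (by decide))
end

section
/- Let w be a squarefree word over the alphabet {0,1,2} and let h be the morphism defined by h(a) = a·a for each letter a. Then h(w) is overlap-free. -/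
/-!
An overlap `a y a y a` in `h(w)` is a factor of length `2d + 1` with period `d = |y| + 1`, and the
letter of `h(w)` at position `j` is `w[j / 2]`. If `d = 2m`, reading the factor at even offsets
gives a square of period `m` in `w`. If `d` is odd, shifting by `d` flips parity, so two positions
of the factor lying in one block `bb` of `h(w)` are carried to positions lying in two consecutive
blocks, which forces two equal adjacent letters in `w` (for `d = 1` the factor `aaa` straddles a
block boundary itself).
-/

/-- A ternary word is an overlap if it has the form a·y·a·y·a for a letter a. -/
def IsOverlap3 (w : List (Fin 3)) : Prop :=
  ∃ (a : Fin 3) (y : List (Fin 3)), w = [a] ++ y ++ [a] ++ y ++ [a]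

/-- A ternary word is overlap-free if no factor is an overlap. -/
def OverlapFree3 (w : List (Fin 3)) : Prop := ∀ f, f <:+: w → ¬ IsOverlap3 f

/-- A ternary word is squarefree if it has no factor x·x with x nonempty. -/
def Squarefree3 (w : List (Fin 3)) : Prop :=
  ∀ x : List (Fin 3), x ≠ [] → ¬ (x ++ x) <:+: w

/-- The doubling morphism h(a) = a·a. -/
def dbl (w : List (Fin 3)) : List (Fin 3) := w.flatMap fun a => [a, a]

theorem length_dbl (w : List (Fin 3)) : (dbl w).length = 2 * w.length := by
  simp [dbl, List.length_flatMap, mul_comm]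

theorem getElem?_dbl (w : List (Fin 3)) (j : ℕ) : (dbl w)[j]? = w[j / 2]? := by
  induction w generalizing j with
  | nil => simp [dbl]
  | cons a w ih =>
    change (a :: a :: dbl w)[j]? = (a :: w)[j / 2]?
    match j with
    | 0 | 1 => simp
    | j + 2 =>
      rw [show (j + 2) / 2 = j / 2 + 1 by omega]
      exact ih j

namespace List

variable {α : Type*}

theorem getElem?_append_append_length_add (s f t : List α) {i : ℕ} (hi : i < f.length) :
    (s ++ f ++ t)[s.length + i]? = f[i]? := by
  rw [getElem?_append_left (by rw [length_append]; omega), getElem?_append_right (by omega),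
    Nat.add_sub_cancel_left]

theorem getElem?_overlap_add_period (a : α) (y : List α) {i : ℕ} (hi : i ≤ y.length + 1) :
    ([a] ++ y ++ [a] ++ y ++ [a])[i]? = ([a] ++ y ++ [a] ++ y ++ [a])[i + (y.length + 1)]? := by
  have hf : [a] ++ y ++ [a] ++ y ++ [a] = (a :: y) ++ (a :: y) ++ [a] := by simp
  rw [hf]
  rcases hi.lt_or_eq with hlt | rfl
  · rw [append_assoc, getElem?_append_left (by rw [length_cons]; omega),
      getElem?_append_right (by simp), getElem?_append_left (by rw [length_cons]; omega)]
    simp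
  · rw [getElem?_append_left (by simp), getElem?_append_right (by simp),
      getElem?_append_right (by simp)]
    simp [show y.length + 1 + (y.length + 1) - (y.length + (y.length + 1) + 1) = 0 by omega]

theorem exists_square_infix_of_periodic (l : List α) {q m : ℕ} (hle : q + 2 * m ≤ l.length)
    (h : ∀ j < m, l[q + j]? = l[q + j + m]?) : ∃ x : List α, x.length = m ∧ x ++ x <:+: l := by
  refine ⟨(l.drop q).take m, by rw [length_take, length_drop]; omega, ?_⟩
  have hshift : ((l.drop q).drop m).take m = (l.drop q).take m := by
    refine ext_getElem? fun j => ?_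
    simp only [getElem?_take, getElem?_drop]
    split_ifs with hj
    · rw [h j hj]; congr 1; omega
    · rfl
  rw [show (l.drop q).take m ++ (l.drop q).take m = (l.drop q).take (m + m) by
    rw [take_add, hshift]]
  exact (take_prefix _ _).isInfix.trans (drop_suffix _ _).isInfix

end List

namespace Squarefree3

variable {w : List (Fin 3)}

theorem not_periodic (hsf : Squarefree3 w) {q m : ℕ} (hm : 0 < m) (hle : q + 2 * m ≤ w.length) :
    ¬ ∀ j < m, w[q + j]? = w[q + j + m]? := fun h => by
  obtain ⟨x, hx, hxx⟩ := w.exists_square_infix_of_periodic hle h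
  exact hsf x (by rintro rfl; exact hm.ne hx) hxx

theorem getElem?_ne_succ (hsf : Squarefree3 w) {k : ℕ} (hk : k + 2 ≤ w.length) :
    w[k]? ≠ w[k + 1]? := fun h =>
  hsf.not_periodic one_pos hk fun j hj => by
    obtain rfl : j = 0 := by omega
    exact h

/-- That is, `dbl w` has no factor of length `2d + 1` and period `d`. -/
theorem not_periodic_dbl (hsf : Squarefree3 w) {p d : ℕ} (hd : 0 < d)
    (hlen : p + 2 * d + 1 ≤ 2 * w.length) :
    ¬ ∀ i ≤ d, w[(p + i) / 2]? = w[(p + i + d) / 2]? := fun h => by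
  rcases Nat.even_or_odd' d with ⟨m, rfl | rfl⟩
  · refine hsf.not_periodic (q := p / 2) (m := m) (by omega) (by omega) fun j hj => ?_
    convert h (2 * j) (by omega) using 2 <;> omega
  · rcases Nat.eq_zero_or_pos m with rfl | hm
    · refine hsf.getElem?_ne_succ (k := p / 2) (by omega) ?_
      have h1 := h 1 (by omega)
      rw [show (p + 1) / 2 = (p + 0 + (2 * 0 + 1)) / 2 by omega, ← h 0 (by omega)] at h1
      convert h1 using 2 <;> omega
    · refine hsf.getElem?_ne_succ (k := (p + p % 2 + 2 * m + 1) / 2) (by omega) ?_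
      have h0 := h (p % 2) (by omega)
      have h1 := h (p % 2 + 1) (by omega)
      rw [show (p + (p % 2 + 1)) / 2 = (p + p % 2) / 2 by omega, h0] at h1
      convert h1 using 2 <;> omega

end Squarefree3

theorem stmt_17 (w : List (Fin 3)) (hsf : Squarefree3 w) :
    OverlapFree3 (dbl w) := by
  rintro _ ⟨s, t, hst⟩ ⟨a, y, rfl⟩
  have hlen : s.length + 2 * (y.length + 1) + 1 ≤ 2 * w.length := by
    rw [← length_dbl, ← hst]
    simp only [List.length_append, List.length_cons, List.length_nil]
    omega
  refine hsf.not_periodic_dbl (p := s.length) (Nat.succ_pos _) hlen fun i hi => ?_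
  have hfactor : ∀ j ≤ 2 * (y.length + 1),
      w[(s.length + j) / 2]? = ([a] ++ y ++ [a] ++ y ++ [a])[j]? := fun j hj => by
    rw [← getElem?_dbl, ← hst, List.getElem?_append_append_length_add]
    simp only [List.length_append, List.length_cons, List.length_nil]
    omega
  rw [hfactor i (by omega), add_assoc, hfactor _ (by omega)]
  exact List.getElem?_overlap_add_period a y hi
end
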